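/- Let M, a be reals with 0 ≤ a < M, u₀ a real constant, C > 0 a real constant, and let g̃ : (0, π) → ℝ be a C² function of θ. On U, the 2-form F₆ = (u₀/(C sinθ)) dθ ∧ [ √(C² + g̃²) (dt − a sin²θ dφ) + g̃ (ρ²/Δ) dr ] is closed, its current density equals j₆ = (u₀ g̃′/(C ρ² sinθ)) [ (g̃/(Δ√(C²+g̃²))) ((r²+a²)∂_t + a ∂_φ) − ∂_r ] where g̃′ = dg̃/dθ, and F₆ is force-free: F₆_{μν} j₆^ν = 0 on U for all μ. -/

import Mathlib

noncomputable section

/-- Partial derivative of `f` in the coordinate direction `μ`,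
coordinates `(x 0, x 1, x 2, x 3) = (t, r, θ, φ)`. -/
def pd (μ : Fin 4) (f : (Fin 4 → ℝ) → ℝ) (x : Fin 4 → ℝ) : ℝ :=
  fderiv ℝ f x (Pi.single μ 1)

/-- ρ² = r² + a² cos²θ. -/
def rho2 (a : ℝ) (x : Fin 4 → ℝ) : ℝ := (x 1) ^ 2 + a ^ 2 * Real.cos (x 2) ^ 2

/-- Δ = r² − 2Mr + a². -/
def Del (M a : ℝ) (x : Fin 4 → ℝ) : ℝ := (x 1) ^ 2 - 2 * M * (x 1) + a ^ 2

/-- Σ² = (r²+a²)² − Δ a² sin²θ. -/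
def Sig2 (M a : ℝ) (x : Fin 4 → ℝ) : ℝ :=
  ((x 1) ^ 2 + a ^ 2) ^ 2 - Del M a x * a ^ 2 * Real.sin (x 2) ^ 2

/-- The Kerr metric in Boyer–Lindquist coordinates `(t, r, θ, φ)`. -/
def kerr (M a : ℝ) (x : Fin 4 → ℝ) : Matrix (Fin 4) (Fin 4) ℝ :=
  Matrix.of fun μ ν =>
    if μ = 0 ∧ ν = 0 then -1 + 2 * M * (x 1) / rho2 a x
    else if (μ = 0 ∧ ν = 3) ∨ (μ = 3 ∧ ν = 0) then
      -(2 * M * (x 1) * a * Real.sin (x 2) ^ 2) / rho2 a x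
    else if μ = 1 ∧ ν = 1 then rho2 a x / Del M a x
    else if μ = 2 ∧ ν = 2 then rho2 a x
    else if μ = 3 ∧ ν = 3 then Sig2 M a x * Real.sin (x 2) ^ 2 / rho2 a x
    else 0

/-- The exterior Kerr domain U = {r > r₊, 0 < θ < π}. -/
def KerrExt (M a : ℝ) : Set (Fin 4 → ℝ) :=
  {x | M + Real.sqrt (M ^ 2 - a ^ 2) < x 1 ∧ 0 < x 2 ∧ x 2 < Real.pi}

/-- `wedge μ ν f` is the antisymmetric matrix of the 2-form `f dx^μ ∧ dx^ν`. -/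
def wedge (μ ν : Fin 4) (f : ℝ) : Matrix (Fin 4) (Fin 4) ℝ :=
  Matrix.of fun i j => if i = μ ∧ j = ν then f else if i = ν ∧ j = μ then -f else 0

/-- A 2-form `F` is closed on `S`: ∂_μ F_{νλ} + ∂_ν F_{λμ} + ∂_λ F_{μν} = 0. -/
def Closed2Form (F : (Fin 4 → ℝ) → Matrix (Fin 4) (Fin 4) ℝ) (S : Set (Fin 4 → ℝ)) : Prop :=
  ∀ x ∈ S, ∀ μ ν lam : Fin 4,
    pd μ (fun y => F y ν lam) x + pd ν (fun y => F y lam μ) x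
      + pd lam (fun y => F y μ ν) x = 0

/-- Current density j^μ = (ρ²sinθ)⁻¹ ∂_ν (ρ²sinθ g^{μα} g^{νβ} F_{αβ}). -/
def current (M a : ℝ) (F : (Fin 4 → ℝ) → Matrix (Fin 4) (Fin 4) ℝ)
    (x : Fin 4 → ℝ) (μ : Fin 4) : ℝ :=
  (rho2 a x * Real.sin (x 2))⁻¹ *
    ∑ ν : Fin 4, pd ν (fun y => rho2 a y * Real.sin (y 2) *
      ∑ i : Fin 4, ∑ j : Fin 4, (kerr M a y)⁻¹ μ i * (kerr M a y)⁻¹ ν j * F y i j) x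

/-- `F` is force-free on `S`: F_{μν} j^ν = 0 for the current density `j` of `F`. -/
def ForceFree (M a : ℝ) (F : (Fin 4 → ℝ) → Matrix (Fin 4) (Fin 4) ℝ)
    (S : Set (Fin 4 → ℝ)) : Prop :=
  ∀ x ∈ S, ∀ μ : Fin 4, ∑ ν : Fin 4, F x μ ν * current M a F x ν = 0

/-- F₆ = (u₀/(C sinθ)) dθ ∧ [ √(C²+g̃²)(dt − a sin²θ dφ) + g̃ (ρ²/Δ) dr ]. -/
def F6 (M a u₀ C : ℝ) (gtil : ℝ → ℝ) (x : Fin 4 → ℝ) : Matrix (Fin 4) (Fin 4) ℝ :=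
  wedge 2 0 (u₀ / (C * Real.sin (x 2)) * Real.sqrt (C ^ 2 + gtil (x 2) ^ 2))
    + wedge 2 3 (u₀ / (C * Real.sin (x 2)) * Real.sqrt (C ^ 2 + gtil (x 2) ^ 2) *
        (-(a * Real.sin (x 2) ^ 2)))
    + wedge 2 1 (u₀ / (C * Real.sin (x 2)) * (gtil (x 2) * rho2 a x / Del M a x))

/-- j₆ = (u₀ g̃′/(C ρ² sinθ)) [ (g̃/(Δ√(C²+g̃²))) ((r²+a²)∂_t + a ∂_φ) − ∂_r ]. -/
def j6 (M a u₀ C : ℝ) (gtil : ℝ → ℝ) (x : Fin 4 → ℝ) : Fin 4 → ℝ := fun μ =>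
  u₀ * deriv gtil (x 2) / (C * rho2 a x * Real.sin (x 2)) *
    ![gtil (x 2) / (Del M a x * Real.sqrt (C ^ 2 + gtil (x 2) ^ 2)) * ((x 1) ^ 2 + a ^ 2),
      -1, 0,
      gtil (x 2) / (Del M a x * Real.sqrt (C ^ 2 + gtil (x 2) ^ 2)) * a] μ


/-! `F₆ = dθ ∧ α`, where the `dt` and `dφ` coefficients of `α` depend on `θ` alone and its `dr`
coefficient on `(r, θ)` alone, so every component of `dF₆` is a sum of partial derivatives that
vanish identically.

Raising both indices with the explicit inverse Boyer–Lindquist metric, `ρ² sinθ F₆^{μν}` has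
`(t, θ)` and `(φ, θ)` components of the form `h(r) √(C² + g̃²)` and a `(θ, r)` component
`(u₀/C) g̃`; the factors `ρ²` and `1/sinθ` cancel. Its divergence therefore only involves
`θ`-derivatives, which gives `j₆`. Finally `j₆` has no `θ`-component, so `F₆_{μν} j₆^ν` vanishes
trivially for `μ ≠ θ`, while for `μ = θ` it is proportional to
`(r² + a²) − ρ² − a² sin²θ = 0`. -/

lemma pd_congr {f g : (Fin 4 → ℝ) → ℝ} {x : Fin 4 → ℝ} (h : f =ᶠ[nhds x] g) (μ : Fin 4) :
    pd μ f x = pd μ g x := by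
  rw [pd, pd, h.fderiv_eq]

lemma pd_neg (μ : Fin 4) (f : (Fin 4 → ℝ) → ℝ) (x : Fin 4 → ℝ) :
    pd μ (fun y => -f y) x = -pd μ f x := by
  rw [pd, pd, fderiv_fun_neg]
  rfl

lemma pd_mul {f g : (Fin 4 → ℝ) → ℝ} {x : Fin 4 → ℝ} (hf : DifferentiableAt ℝ f x)
    (hg : DifferentiableAt ℝ g x) (μ : Fin 4) :
    pd μ (fun y => f y * g y) x = f x * pd μ g x + g x * pd μ f x := by
  rw [pd, pd, pd, fderiv_fun_mul hf hg]
  rfl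

lemma pd_eq_zero_of_forall_add_single {μ : Fin 4} {f : (Fin 4 → ℝ) → ℝ} {x : Fin 4 → ℝ}
    (hf : ∀ t : ℝ, f (x + t • Pi.single μ 1) = f x) : pd μ f x = 0 := by
  by_cases hd : DifferentiableAt ℝ f x
  · rw [pd, ← hd.lineDeriv_eq_fderiv, lineDeriv]
    simp [hf]
  · rw [pd, fderiv_zero_of_not_differentiableAt hd]
    rfl

@[simp]
lemma pd_const (μ : Fin 4) (c : ℝ) (x : Fin 4 → ℝ) : pd μ (fun _ => c) x = 0 :=
  pd_eq_zero_of_forall_add_single fun _ => rfl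

lemma pd_comp_apply₂_eq_zero {μ i j : Fin 4} (hi : μ ≠ i) (hj : μ ≠ j) (f : ℝ → ℝ → ℝ)
    (x : Fin 4 → ℝ) : pd μ (fun y => f (y i) (y j)) x = 0 :=
  pd_eq_zero_of_forall_add_single fun t => by
    simp [Pi.single_eq_of_ne hi.symm, Pi.single_eq_of_ne hj.symm]

lemma pd_comp_apply_eq_zero {μ i : Fin 4} (hi : μ ≠ i) (f : ℝ → ℝ) (x : Fin 4 → ℝ) :
    pd μ (fun y => f (y i)) x = 0 :=
  pd_comp_apply₂_eq_zero hi hi (fun _ θ => f θ) x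

lemma pd_comp_apply {i : Fin 4} {f : ℝ → ℝ} {f' : ℝ} {x : Fin 4 → ℝ}
    (hf : HasDerivAt f f' (x i)) : pd i (fun y => f (y i)) x = f' := by
  have h : HasFDerivAt (fun y : Fin 4 → ℝ => f (y i)) (f' • ContinuousLinearMap.proj i) x :=
    hf.comp_hasFDerivAt x (hasFDerivAt_apply (𝕜 := ℝ) i x)
  simp [pd, h.fderiv]

lemma pd_mul_comp_apply {i j : Fin 4} (hij : i ≠ j) {h f : ℝ → ℝ} {f' : ℝ} {x : Fin 4 → ℝ}
    (hh : DifferentiableAt ℝ h (x j)) (hf : HasDerivAt f f' (x i)) :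
    pd i (fun y => h (y j) * f (y i)) x = h (x j) * f' := by
  have hh' : DifferentiableAt ℝ (fun y : Fin 4 → ℝ => h (y j)) x :=
    hh.comp x (differentiableAt_apply j x)
  have hf' : DifferentiableAt ℝ (fun y : Fin 4 → ℝ => f (y i)) x :=
    hf.differentiableAt.comp x (differentiableAt_apply i x)
  rw [pd_mul hh' hf', pd_comp_apply hf, pd_comp_apply_eq_zero hij, mul_zero, add_zero]

lemma closed2Form_dtheta_wedge (A D : ℝ → ℝ) (B : ℝ → ℝ → ℝ) (S : Set (Fin 4 → ℝ)) :
    Closed2Form (fun y => wedge 2 0 (A (y 2)) + wedge 2 3 (D (y 2)) + wedge 2 1 (B (y 1) (y 2)))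
      S := by
  intro x _ μ ν lam
  fin_cases μ <;> fin_cases ν <;> fin_cases lam <;>
    simp [wedge, pd_neg, pd_comp_apply_eq_zero, pd_comp_apply₂_eq_zero]

lemma isOpen_kerrExt (M a : ℝ) : IsOpen (KerrExt M a) :=
  (isOpen_lt continuous_const (continuous_apply 1)).inter
    ((isOpen_lt continuous_const (continuous_apply 2)).inter
      (isOpen_lt (continuous_apply 2) continuous_const))

section KerrExt

variable {M a : ℝ} {x : Fin 4 → ℝ}

lemma sin_pos_of_mem_kerrExt (hx : x ∈ KerrExt M a) : 0 < Real.sin (x 2) :=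
  Real.sin_pos_of_pos_of_lt_pi hx.2.1 hx.2.2

lemma del_pos_of_mem_kerrExt (haM : |a| ≤ M) (hx : x ∈ KerrExt M a) : 0 < Del M a x := by
  have hdisc : 0 ≤ M ^ 2 - a ^ 2 := by nlinarith [sq_abs a, abs_nonneg a]
  have hsqrt := Real.sq_sqrt hdisc
  have hr : Real.sqrt (M ^ 2 - a ^ 2) < x 1 - M := by linarith [hx.1]
  unfold Del
  nlinarith [Real.sqrt_nonneg (M ^ 2 - a ^ 2)]

lemma rho2_pos_of_mem_kerrExt (haM : |a| ≤ M) (hx : x ∈ KerrExt M a) : 0 < rho2 a x := by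
  have hr : 0 < x 1 := by linarith [hx.1, Real.sqrt_nonneg (M ^ 2 - a ^ 2), abs_nonneg a]
  unfold rho2
  positivity

end KerrExt

/-- The `(t, φ)` block of `kerr` has determinant `-Δ sin²θ`, whence the denominators. -/
def kerrInv (M a : ℝ) (x : Fin 4 → ℝ) : Matrix (Fin 4) (Fin 4) ℝ :=
  Matrix.of fun μ ν =>
    if μ = 0 ∧ ν = 0 then -(Sig2 M a x) / (rho2 a x * Del M a x)
    else if (μ = 0 ∧ ν = 3) ∨ (μ = 3 ∧ ν = 0) then
      -(2 * M * (x 1) * a) / (rho2 a x * Del M a x)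
    else if μ = 1 ∧ ν = 1 then Del M a x / rho2 a x
    else if μ = 2 ∧ ν = 2 then (rho2 a x)⁻¹
    else if μ = 3 ∧ ν = 3 then
      (Del M a x - a ^ 2 * Real.sin (x 2) ^ 2) / (Del M a x * rho2 a x * Real.sin (x 2) ^ 2)
    else 0

lemma kerr_mul_kerrInv {M a : ℝ} {x : Fin 4 → ℝ} (hρ : rho2 a x ≠ 0) (hΔ : Del M a x ≠ 0)
    (hs : Real.sin (x 2) ≠ 0) : kerr M a x * kerrInv M a x = 1 := by
  have hρ' : (x 1) ^ 2 + a ^ 2 * (1 - Real.sin (x 2) ^ 2) ≠ 0 := by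
    rwa [← Real.cos_sq']
  have hΔ' : (x 1) ^ 2 - 2 * M * (x 1) + a ^ 2 ≠ 0 := hΔ
  ext i j
  rw [Matrix.mul_apply, Fin.sum_univ_four]
  fin_cases i <;> fin_cases j <;>
    simp [kerr, kerrInv] <;>
    field_simp <;>
    simp only [Sig2, Del, rho2, Real.cos_sq'] <;>
    ring

lemma kerr_inv_eq_kerrInv {M a : ℝ} {x : Fin 4 → ℝ} (hρ : rho2 a x ≠ 0) (hΔ : Del M a x ≠ 0)
    (hs : Real.sin (x 2) ≠ 0) : (kerr M a x)⁻¹ = kerrInv M a x :=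
  Matrix.inv_eq_right_inv (kerr_mul_kerrInv hρ hΔ hs)

lemma closed2Form_F6 (M a u₀ C : ℝ) (gtil : ℝ → ℝ) :
    Closed2Form (F6 M a u₀ C gtil) (KerrExt M a) :=
  closed2Form_dtheta_wedge (fun θ => u₀ / (C * Real.sin θ) * Real.sqrt (C ^ 2 + gtil θ ^ 2))
    (fun θ => u₀ / (C * Real.sin θ) * Real.sqrt (C ^ 2 + gtil θ ^ 2) * (-(a * Real.sin θ ^ 2)))
    (fun r θ => u₀ / (C * Real.sin θ) *
      (gtil θ * (r ^ 2 + a ^ 2 * Real.cos θ ^ 2) / (r ^ 2 - 2 * M * r + a ^ 2)))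
    (KerrExt M a)

/-- `ρ² sinθ F₆^{μν}`. -/
def densRaisedF6 (M a u₀ C : ℝ) (gtil : ℝ → ℝ) (y : Fin 4 → ℝ) : Matrix (Fin 4) (Fin 4) ℝ :=
  wedge 0 2 (u₀ / C * ((y 1) ^ 2 + a ^ 2) / Del M a y * Real.sqrt (C ^ 2 + gtil (y 2) ^ 2))
    + wedge 3 2 (u₀ / C * a / Del M a y * Real.sqrt (C ^ 2 + gtil (y 2) ^ 2))
    + wedge 2 1 (u₀ / C * gtil (y 2))

lemma rho2_mul_sin_mul_raise_F6 {M a u₀ C : ℝ} (gtil : ℝ → ℝ) {y : Fin 4 → ℝ}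
    (hρ : rho2 a y ≠ 0) (hΔ : Del M a y ≠ 0) (hs : Real.sin (y 2) ≠ 0)
    (μ ν : Fin 4) :
    rho2 a y * Real.sin (y 2) *
      ∑ i : Fin 4, ∑ j : Fin 4, kerrInv M a y μ i * kerrInv M a y ν j * F6 M a u₀ C gtil y i j
    = densRaisedF6 M a u₀ C gtil y μ ν := by
  fin_cases μ <;> fin_cases ν <;>
    simp [Fin.sum_univ_four, densRaisedF6, kerrInv, F6, wedge] <;>
    field_simp <;>
    simp only [Sig2, Del, rho2, Real.cos_sq'] <;>
    ring

lemma sum_pd_wedge_dtheta {h₀ h₃ q p : ℝ → ℝ} {q' p' : ℝ} {x : Fin 4 → ℝ}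
    (hh₀ : DifferentiableAt ℝ h₀ (x 1)) (hh₃ : DifferentiableAt ℝ h₃ (x 1))
    (hq : HasDerivAt q q' (x 2)) (hp : HasDerivAt p p' (x 2)) (μ : Fin 4) :
    ∑ ν : Fin 4, pd ν (fun y => (wedge 0 2 (h₀ (y 1) * q (y 2)) + wedge 3 2 (h₃ (y 1) * q (y 2))
      + wedge 2 1 (p (y 2))) μ ν) x = ![h₀ (x 1) * q', -p', 0, h₃ (x 1) * q'] μ := by
  fin_cases μ <;> simp [Fin.sum_univ_four, wedge, pd_neg]
  · exact pd_mul_comp_apply (by decide) hh₀ hq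
  · exact pd_comp_apply hp
  · rw [pd_comp_apply₂_eq_zero (by decide) (by decide) (fun r θ => h₀ r * q θ),
      pd_comp_apply_eq_zero (by decide), pd_comp_apply₂_eq_zero (by decide) (by decide)
      (fun r θ => h₃ r * q θ)]
    simp
  · exact pd_mul_comp_apply (by decide) hh₃ hq

lemma hasDerivAt_sqrt_add_sq {c : ℝ} (hc : 0 < c) {g : ℝ → ℝ} {g' θ : ℝ}
    (hg : HasDerivAt g g' θ) :
    HasDerivAt (fun θ => Real.sqrt (c + g θ ^ 2)) (g θ * g' / Real.sqrt (c + g θ ^ 2)) θ := by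
  have hpos : 0 < c + g θ ^ 2 := by positivity
  convert ((hg.fun_pow 2).const_add c).sqrt hpos.ne' using 1
  field_simp
  ring

lemma current_F6_eq_j6 {M a u₀ C : ℝ} {gtil : ℝ → ℝ} (haM : |a| ≤ M) (hC : C ≠ 0)
    {x : Fin 4 → ℝ} (hx : x ∈ KerrExt M a) (hg : DifferentiableAt ℝ gtil (x 2)) (μ : Fin 4) :
    current M a (F6 M a u₀ C gtil) x μ = j6 M a u₀ C gtil x μ := by
  have hρ := (rho2_pos_of_mem_kerrExt haM hx).ne'
  have hΔ := (del_pos_of_mem_kerrExt haM hx).ne'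
  have hs := (sin_pos_of_mem_kerrExt hx).ne'
  have hdens : ∀ ν, pd ν (fun y => rho2 a y * Real.sin (y 2) * ∑ i : Fin 4, ∑ j : Fin 4,
      (kerr M a y)⁻¹ μ i * (kerr M a y)⁻¹ ν j * F6 M a u₀ C gtil y i j) x
      = pd ν (fun y => densRaisedF6 M a u₀ C gtil y μ ν) x := fun ν => by
    refine pd_congr ?_ ν
    filter_upwards [(isOpen_kerrExt M a).mem_nhds hx] with y hy
    have hρy := (rho2_pos_of_mem_kerrExt haM hy).ne'
    have hΔy := (del_pos_of_mem_kerrExt haM hy).ne'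
    have hsy := (sin_pos_of_mem_kerrExt hy).ne'
    rw [kerr_inv_eq_kerrInv hρy hΔy hsy]
    exact rho2_mul_sin_mul_raise_F6 gtil hρy hΔy hsy μ ν
  have hΔ' : (x 1) ^ 2 - 2 * M * (x 1) + a ^ 2 ≠ 0 := hΔ
  have hQ := hasDerivAt_sqrt_add_sq (by positivity : 0 < C ^ 2) hg.hasDerivAt
  have hdiv : ∑ ν : Fin 4, pd ν (fun y => densRaisedF6 M a u₀ C gtil y μ ν) x
      = ![u₀ / C * ((x 1) ^ 2 + a ^ 2) / Del M a x * (gtil (x 2) * deriv gtil (x 2) /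
            Real.sqrt (C ^ 2 + gtil (x 2) ^ 2)), -(u₀ / C * deriv gtil (x 2)), 0,
          u₀ / C * a / Del M a x * (gtil (x 2) * deriv gtil (x 2) /
            Real.sqrt (C ^ 2 + gtil (x 2) ^ 2))] μ :=
    sum_pd_wedge_dtheta (h₀ := fun r => u₀ / C * (r ^ 2 + a ^ 2) / (r ^ 2 - 2 * M * r + a ^ 2))
      (h₃ := fun r => u₀ / C * a / (r ^ 2 - 2 * M * r + a ^ 2))
      ((by fun_prop : DifferentiableAt ℝ (fun r => u₀ / C * (r ^ 2 + a ^ 2)) (x 1)).div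
        (by fun_prop) hΔ')
      ((by fun_prop : DifferentiableAt ℝ (fun r => u₀ / C * a) (x 1)).div (by fun_prop) hΔ')
      hQ (hg.hasDerivAt.const_mul (u₀ / C)) μ
  have hsq : Real.sqrt (C ^ 2 + gtil (x 2) ^ 2) ≠ 0 := by positivity
  rw [current, Finset.sum_congr rfl fun ν _ => hdens ν, hdiv]
  fin_cases μ <;> simp [j6] <;> field_simp

lemma sum_F6_mul_j6 {M a u₀ C : ℝ} {gtil : ℝ → ℝ} (hC : C ≠ 0) (x : Fin 4 → ℝ)
    (μ : Fin 4) :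
    ∑ ν : Fin 4, F6 M a u₀ C gtil x μ ν * j6 M a u₀ C gtil x ν = 0 := by
  have hsq : Real.sqrt (C ^ 2 + gtil (x 2) ^ 2) ≠ 0 := by positivity
  fin_cases μ <;> simp [Fin.sum_univ_four, F6, wedge, j6]
  field_simp
  simp only [rho2, Real.cos_sq']
  ring

/-- F₆ is closed, its current density is j₆, and F₆ is force-free. -/
theorem kerr_F6_forcefree (M a u₀ C : ℝ) (ha : 0 ≤ a) (haM : a < M) (hC : 0 < C)
    (gtil : ℝ → ℝ) (hg : ContDiffOn ℝ 2 gtil (Set.Ioo 0 Real.pi)) :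
    Closed2Form (F6 M a u₀ C gtil) (KerrExt M a) ∧
    (∀ x ∈ KerrExt M a, ∀ μ : Fin 4,
      current M a (F6 M a u₀ C gtil) x μ = j6 M a u₀ C gtil x μ) ∧
    ForceFree M a (F6 M a u₀ C gtil) (KerrExt M a) := by
  have habs : |a| ≤ M := by rw [abs_of_nonneg ha]; exact haM.le
  have hcurrent : ∀ x ∈ KerrExt M a, ∀ μ : Fin 4,
      current M a (F6 M a u₀ C gtil) x μ = j6 M a u₀ C gtil x μ := fun x hx =>
    current_F6_eq_j6 habs hC.ne' hx <| (hg.differentiableOn (by norm_num)).differentiableAt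
      (isOpen_Ioo.mem_nhds ⟨hx.2.1, hx.2.2⟩)
  refine ⟨closed2Form_F6 M a u₀ C gtil, hcurrent, fun x hx μ => ?_⟩
  simp only [hcurrent x hx]
  exact sum_F6_mul_j6 hC.ne' x μ
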